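/- If S ⊆ ℝⁿ is absolutely symmetric, then for every Y ∈ ℝ^{n×t}, dist(Y, σ⁻¹(S)) in Frobenius norm equals dist(σ(Y), S) in Euclidean norm. -/

import Mathlib

open scoped RealInnerProductSpace
open Matrix
open MeasureTheory

noncomputable section

/-- The normal space to `S` at `x`: the orthogonal complement of the tangent cone. -/
def NormalAt {E : Type*} [NormedAddCommGroup E] [InnerProductSpace ℝ E]
    (S : Set E) (x : E) : Set E :=
  {v | ∀ w ∈ tangentConeAt ℝ S x, ⟪v, w⟫ = 0}

/-- `x` is a C²-smooth point of `S`: near `x`, `S` is the regular zero set of a C² map. -/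
def SmoothPt {E : Type*} [NormedAddCommGroup E] [NormedSpace ℝ E]
    (S : Set E) (x : E) : Prop :=
  x ∈ S ∧ ∃ (U : Set E) (k : ℕ) (f : E → EuclideanSpace ℝ (Fin k)),
    IsOpen U ∧ x ∈ U ∧ ContDiffOn ℝ 2 f U ∧
    (∀ z ∈ U, Function.Surjective (fderivWithin ℝ f U z)) ∧
    S ∩ U = {z ∈ U | f z = 0}

/-- ED critical point of `y` on `S`. -/
def EDCritPt {E : Type*} [NormedAddCommGroup E] [InnerProductSpace ℝ E]
    (S : Set E) (y x : E) : Prop :=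
  SmoothPt S x ∧ (y - x) ∈ NormalAt S x

/-- Metric projection of `y` onto `S`. -/
def projSet {E : Type*} [NormedAddCommGroup E] (S : Set E) (y : E) : Set E :=
  {x ∈ S | dist y x = Metric.infDist y S}

/-- Matrices viewed as Euclidean space (Frobenius norm). -/
def toEuc {n t : ℕ} (X : Matrix (Fin n) (Fin t) ℝ) : EuclideanSpace ℝ (Fin n × Fin t) :=
  WithLp.toLp 2 (fun p => X p.1 p.2)

/-- Rectangular diagonal matrix. -/
def diagRect {n t : ℕ} (x : Fin n → ℝ) : Matrix (Fin n) (Fin t) ℝ :=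
  fun i j => if (j : ℕ) = (i : ℕ) then x i else 0

/-- Singular values of a rectangular matrix, in non-increasing order. -/
def singvals {n t : ℕ} (X : Matrix (Fin n) (Fin t) ℝ) : EuclideanSpace ℝ (Fin n) :=
  let g : Fin n → ℝ := fun j =>
    Real.sqrt ((Matrix.isHermitian_mul_conjTranspose_self X).eigenvalues j)
  WithLp.toLp 2 (fun i => g (Tuple.sort (fun j => -g j) i))

/-- A vector of signs. -/
def IsSignFn {n : ℕ} (ε : Fin n → ℝ) : Prop := ∀ i, ε i = 1 ∨ ε i = -1

/-- Absolutely symmetric set: invariant under all signed permutations of coordinates. -/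
def AbsSymm {n : ℕ} (S : Set (EuclideanSpace ℝ (Fin n))) : Prop :=
  ∀ (π : Equiv.Perm (Fin n)) (ε : Fin n → ℝ), IsSignFn ε →
    ∀ x : EuclideanSpace ℝ (Fin n), x ∈ S ↔ (WithLp.toLp 2 (fun i => ε i * x (π i)) : EuclideanSpace ℝ (Fin n)) ∈ S

/-- Orthogonally invariant set of matrices. -/
def OrthInv {n t : ℕ} (M : Set (Matrix (Fin n) (Fin t) ℝ)) : Prop :=
  ∀ (U : Matrix (Fin n) (Fin n) ℝ) (V : Matrix (Fin t) (Fin t) ℝ),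
    U * Uᵀ = 1 → V * Vᵀ = 1 → (fun X => U * X * Vᵀ) '' M = M

/-- Projection onto a set of matrices in Frobenius norm. -/
def matProj {n t : ℕ} (A : Set (Matrix (Fin n) (Fin t) ℝ)) (Y : Matrix (Fin n) (Fin t) ℝ) :
    Set (Matrix (Fin n) (Fin t) ℝ) :=
  {X ∈ A | dist (toEuc Y) (toEuc X) = Metric.infDist (toEuc Y) (toEuc '' A)}

/-- ED critical point in matrix space (with Frobenius inner product). -/
def MatEDCritPt {n t : ℕ} (M : Set (Matrix (Fin n) (Fin t) ℝ))
    (Y X : Matrix (Fin n) (Fin t) ℝ) : Prop :=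
  EDCritPt (toEuc '' M) (toEuc Y) (toEuc X)

/-!
For `X` with `σ(X) ∈ S`, Mirsky's inequality `‖σ(Y) - σ(X)‖ ≤ ‖Y - X‖` gives
`dist(σ(Y), S) ≤ dist(Y, σ⁻¹(S))`. It follows from von Neumann's trace inequality
`tr(Y Xᵀ) ≤ ⟪σ(Y), σ(X)⟫`: with singular value decompositions of `Y` and `X` the trace becomes
`∑ σᵢ(Y) σⱼ(X) Zᵢⱼ Wⱼᵢ` for orthogonal `Z`, `W`, and `Zᵢⱼ Wⱼᵢ ≤ (Zᵢⱼ² + Wⱼᵢ²) / 2` is a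
substochastic matrix, on which Birkhoff's theorem and the rearrangement inequality bound the sum.

Conversely, for `x ∈ S` let `x̂` be the vector of the `|xᵢ|` in non-increasing order; it lies in
`S` by absolute symmetry. If `Y = U diag(σ(Y)) Vᵀ`, then `X = U diag(x̂) Vᵀ` has `σ(X) = x̂` and
`‖Y - X‖ = ‖σ(Y) - x̂‖ ≤ ‖σ(Y) - x‖`, the last step by the rearrangement inequality.
-/

open Finset

theorem Metric.infDist_le_infDist_of_forall_exists {α β : Type*} [PseudoMetricSpace α]
    [PseudoMetricSpace β] {x : α} {s : Set α} {y : β} {t : Set β} (ht : t.Nonempty)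
    (h : ∀ y' ∈ t, ∃ x' ∈ s, dist x x' ≤ dist y y') :
    Metric.infDist x s ≤ Metric.infDist y t :=
  (Metric.le_infDist ht).2 fun y' hy' =>
    let ⟨_, hx', hle⟩ := h y' hy'
    (Metric.infDist_le_dist_of_mem hx').trans hle

theorem dist_le_dist_of_inner_le {E F : Type*} [NormedAddCommGroup E] [InnerProductSpace ℝ E]
    [NormedAddCommGroup F] [InnerProductSpace ℝ F] {x y : E} {x' y' : F}
    (hx : ‖x‖ = ‖x'‖) (hy : ‖y‖ = ‖y'‖) (h : ⟪x', y'⟫ ≤ ⟪x, y⟫) :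
    dist x y ≤ dist x' y' := by
  rw [dist_eq_norm, dist_eq_norm, ← sq_le_sq₀ (norm_nonneg _) (norm_nonneg _),
    norm_sub_sq_real, norm_sub_sq_real, hx, hy]
  linarith

section Rearrangement

variable {ι : Type*} [Fintype ι] [DecidableEq ι] {a b : ι → ℝ} {D : Matrix ι ι ℝ}

theorem Monovary.sum_mul_mul_le_sum_mul_of_mem_doublyStochastic (hab : Monovary a b)
    (hD : D ∈ doublyStochastic ℝ ι) :
    ∑ i, ∑ j, a i * b j * D i j ≤ ∑ i, a i * b i := by
  have hlin : IsLinearMap ℝ fun M : Matrix ι ι ℝ => ∑ i, ∑ j, a i * b j * M i j :=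
    ⟨fun M N => by simp only [Matrix.add_apply, mul_add, sum_add_distrib],
      fun c M => by
        simp only [Matrix.smul_apply, smul_eq_mul, mul_sum]
        exact sum_congr rfl fun _ _ => sum_congr rfl fun _ _ => by ring⟩
  rw [← SetLike.mem_coe, doublyStochastic_eq_convexHull_permMatrix] at hD
  refine convexHull_min ?_ (convex_halfSpace_le hlin _) hD
  rintro _ ⟨σ, rfl⟩
  simpa [Equiv.toPEquiv_apply, PEquiv.toMatrix_apply] using hab.sum_mul_comp_perm_le_sum_mul

theorem Monovary.sum_mul_mul_le_sum_mul_of_substochastic (hab : Monovary a b) (ha : 0 ≤ a)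
    (hb : 0 ≤ b) (hD : ∀ i j, 0 ≤ D i j) (hrow : ∀ i, ∑ j, D i j ≤ 1)
    (hcol : ∀ j, ∑ i, D i j ≤ 1) : ∑ i, ∑ j, a i * b j * D i j ≤ ∑ i, a i * b i := by
  -- Complete `D` to a doubly stochastic matrix of twice the size.
  let D' : Matrix (ι ⊕ ι) (ι ⊕ ι) ℝ :=
    fromBlocks D (diagonal fun i => 1 - ∑ j, D i j) (diagonal fun j => 1 - ∑ i, D i j) Dᵀ
  have hD' : D' ∈ doublyStochastic ℝ (ι ⊕ ι) := by
    refine mem_doublyStochastic_iff_sum.2 ⟨?_, ?_, ?_⟩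
    · rintro (i | i) (j | j) <;>
        simp only [D', fromBlocks_apply₁₁, fromBlocks_apply₁₂, fromBlocks_apply₂₁,
          fromBlocks_apply₂₂, diagonal_apply, transpose_apply] <;>
        (try split_ifs) <;> linarith [hD i j, hD j i, hrow i, hcol i]
    · rintro (i | i) <;> simp [D', Fintype.sum_sum_type, diagonal_apply]
    · rintro (j | j) <;> simp [D', Fintype.sum_sum_type, diagonal_apply]
  have hab' : Monovary (Sum.elim a (0 : ι → ℝ)) (Sum.elim b (0 : ι → ℝ)) := by
    rintro (i | i) (j | j) h <;>
      simp only [Sum.elim_inl, Sum.elim_inr, Pi.zero_apply, lt_self_iff_false] at h ⊢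
    · exact hab h
    · exact absurd h (hb i).not_gt
    · exact ha j
  simpa [D', Fintype.sum_sum_type] using hab'.sum_mul_mul_le_sum_mul_of_mem_doublyStochastic hD'

end Rearrangement

theorem sum_mul_le_sum_mul_abs_comp_perm {ι : Type*} [Fintype ι] {a x : ι → ℝ}
    (ha₀ : ∀ i, 0 ≤ a i) {τ : Equiv.Perm ι} (h : Monovary a fun i => |x (τ i)|) :
    ∑ i, a i * x i ≤ ∑ i, a i * |x (τ i)| :=
  calc ∑ i, a i * x i ≤ ∑ i, a i * |x (τ (τ.symm i))| := by
        simp only [Equiv.apply_symm_apply]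
        exact sum_le_sum fun i _ => mul_le_mul_of_nonneg_left (le_abs_self _) (ha₀ i)
    _ ≤ ∑ i, a i * |x (τ i)| := h.sum_mul_comp_perm_le_sum_mul

theorem exists_perm_antitone_abs {n : ℕ} (x : Fin n → ℝ) :
    ∃ τ : Equiv.Perm (Fin n), Antitone fun i => |x (τ i)| :=
  ⟨_, fun _ _ hij => neg_le_neg_iff.1 <| Tuple.monotone_sort (fun j => -|x j|) hij⟩

theorem eq_of_antitone_of_map_univ_val_eq {n : ℕ} {β : Type*} [LinearOrder β]
    {f g : Fin n → β} (hf : Antitone f) (hg : Antitone g)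
    (h : univ.val.map f = univ.val.map g) : f = g := by
  have hperm : (List.ofFn f).Perm (List.ofFn g) := by
    rw [← Multiset.coe_eq_coe]
    simpa [← Fin.univ_val_map] using h
  have hf' : (List.ofFn f).Pairwise (· ≥ ·) := List.pairwise_ofFn.2 fun _ _ hij => hf hij.le
  have hg' : (List.ofFn g).Pairwise (· ≥ ·) := List.pairwise_ofFn.2 fun _ _ hij => hg hij.le
  exact List.ofFn_injective (hperm.eq_of_pairwise' hf' hg')

theorem sum_sq_apply_comp_le_one {ι κ : Type*} [Fintype ι] [Fintype κ] [DecidableEq κ]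
    {Z : Matrix κ κ ℝ} (hZ : Z * Zᵀ = 1) {f : ι → κ} (hf : Function.Injective f)
    (k : κ) : ∑ i, Z k (f i) ^ 2 ≤ 1 :=
  calc ∑ i, Z k (f i) ^ 2 = ∑ l ∈ univ.map ⟨f, hf⟩, Z k l ^ 2 :=
        (sum_map univ ⟨f, hf⟩ fun l => Z k l ^ 2).symm
    _ ≤ ∑ l, Z k l ^ 2 := sum_le_univ_sum_of_nonneg fun _ => sq_nonneg _
    _ = 1 := by simpa [mul_apply, sq] using congrFun (congrFun hZ k) k

theorem Matrix.IsHermitian.map_eigenvalues_eq {m : Type*} [Fintype m] [DecidableEq m]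
    {A : Matrix m m ℝ} (hA : A.IsHermitian) {U : Matrix m m ℝ} (hU : Uᵀ * U = 1)
    {d : m → ℝ} (hAd : A = U * diagonal d * Uᵀ) :
    univ.val.map hA.eigenvalues = univ.val.map d := by
  have hchar : A.charpoly = (diagonal d).charpoly := by
    rw [hAd, charpoly_mul_comm, ← Matrix.mul_assoc, hU, Matrix.one_mul]
  have := congrArg Polynomial.roots hchar
  rw [hA.roots_charpoly_eq_eigenvalues, charpoly_diagonal, Polynomial.roots_prod] at this
  · simpa using this
  · simp [prod_ne_zero_iff, Polynomial.X_sub_C_ne_zero]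

theorem exists_orthonormalBasis_smul_eq {E : Type*} [NormedAddCommGroup E]
    [InnerProductSpace ℝ E] [FiniteDimensional ℝ E] {ι κ : Type*} [Fintype κ]
    (hκ : Module.finrank ℝ E = Fintype.card κ) (f : ι ↪ κ) {w : ι → E}
    (hw : Pairwise fun i j => ⟪w i, w j⟫ = 0) :
    ∃ b : OrthonormalBasis κ ℝ E, ∀ i, w i = ‖w i‖ • b (f i) := by
  classical
  let v : κ → E := Function.extend f (fun i => ‖w i‖⁻¹ • w i) 0
  have hv : ∀ i, v (f i) = ‖w i‖⁻¹ • w i := fun i => f.injective.extend_apply _ _ i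
  let s : Set κ := f '' {i | w i ≠ 0}
  have hs : Orthonormal ℝ (s.domRestrict v) := by
    rw [orthonormal_iff_ite]
    rintro ⟨_, i, hi, rfl⟩ ⟨_, j, -, rfl⟩
    simp only [Set.domRestrict_apply, hv, inner_smul_left, inner_smul_right]
    obtain rfl | hij := eq_or_ne i j
    · have hi : ‖w i‖ ≠ 0 := norm_ne_zero_iff.2 hi
      simp only [real_inner_self_eq_norm_sq, if_true, conj_trivial]
      field_simp
    · simp only [hw hij, mul_zero]
      exact (if_neg fun h => hij (f.injective (congrArg Subtype.val h))).symm
  obtain ⟨b, hb⟩ := hs.exists_orthonormalBasis_extension_of_card_eq hκ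
  refine ⟨b, fun i => ?_⟩
  obtain hi | hi := eq_or_ne (w i) 0
  · simp [hi]
  · rw [hb _ ⟨i, hi, rfl⟩, hv, smul_smul, mul_inv_cancel₀ (norm_ne_zero_iff.2 hi), one_smul]

section Frobenius

variable {n t : ℕ}

theorem inner_toEuc (A B : Matrix (Fin n) (Fin t) ℝ) :
    ⟪toEuc A, toEuc B⟫ = trace (A * Bᵀ) := by
  simp [toEuc, PiLp.inner_apply, trace, mul_apply, Fintype.sum_prod_type, mul_comm]

theorem inner_toEuc_conj {U : Matrix (Fin n) (Fin n) ℝ} {V : Matrix (Fin t) (Fin t) ℝ}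
    (hU : Uᵀ * U = 1) (hV : Vᵀ * V = 1) (A B : Matrix (Fin n) (Fin t) ℝ) :
    ⟪toEuc (U * A * Vᵀ), toEuc (U * B * Vᵀ)⟫ = ⟪toEuc A, toEuc B⟫ := by
  rw [inner_toEuc, inner_toEuc, transpose_mul, transpose_mul, transpose_transpose,
    show U * A * Vᵀ * (V * (Bᵀ * Uᵀ)) = U * (A * (Vᵀ * V) * Bᵀ) * Uᵀ by
      simp only [Matrix.mul_assoc],
    hV, Matrix.mul_one, trace_mul_cycle, hU, Matrix.one_mul]

theorem diagRect_mul_apply (hnt : n ≤ t) {α : Type*} (x : Fin n → ℝ)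
    (N : Matrix (Fin t) α ℝ) (i : Fin n) (j : α) :
    (diagRect (t := t) x * N) i j = x i * N (Fin.castLE hnt i) j := by
  rw [mul_apply, sum_eq_single (Fin.castLE hnt i)]
  · simp [diagRect]
  · intro k _ hk
    simp only [diagRect, ite_mul, zero_mul]
    exact if_neg fun h => hk (Fin.ext h)
  · simp

theorem diagRect_mul_mul_transpose_diagRect_apply (hnt : n ≤ t) (x y : Fin n → ℝ)
    (Z : Matrix (Fin t) (Fin t) ℝ) (i j : Fin n) :
    (diagRect (t := t) x * Z * (diagRect (t := t) y)ᵀ) i j =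
      x i * y j * Z (Fin.castLE hnt i) (Fin.castLE hnt j) := by
  rw [Matrix.mul_assoc, diagRect_mul_apply hnt, ← transpose_transpose Z, ← transpose_mul,
    transpose_apply, diagRect_mul_apply hnt, transpose_apply, transpose_transpose, mul_assoc]

theorem diagRect_mul_transpose_diagRect (hnt : n ≤ t) (x y : Fin n → ℝ) :
    diagRect (t := t) x * (diagRect (t := t) y)ᵀ = diagonal fun i => x i * y i := by
  ext i j
  have h := diagRect_mul_mul_transpose_diagRect_apply hnt x y 1 i j
  rw [Matrix.mul_one] at h
  rw [h, one_apply, diagonal_apply]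
  by_cases hij : i = j <;> simp [hij, (Fin.castLE_injective hnt).eq_iff]

theorem inner_toEuc_diagRect (hnt : n ≤ t) (x y : EuclideanSpace ℝ (Fin n)) :
    ⟪toEuc (diagRect (t := t) x), toEuc (diagRect (t := t) y)⟫ = ⟪x, y⟫ := by
  rw [inner_toEuc, diagRect_mul_transpose_diagRect hnt, trace_diagonal]
  simp [PiLp.inner_apply, mul_comm]

end Frobenius

section SingularValues

variable {n t : ℕ}

theorem singvals_nonneg (X : Matrix (Fin n) (Fin t) ℝ) (i : Fin n) : 0 ≤ singvals X i :=
  Real.sqrt_nonneg _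

theorem singvals_antitone (X : Matrix (Fin n) (Fin t) ℝ) : Antitone (singvals X) :=
  fun _ _ hij => neg_le_neg_iff.1 <| Tuple.monotone_sort
    (fun j => -√((isHermitian_mul_conjTranspose_self X).eigenvalues j)) hij

theorem exists_perm_sq_singvals (X : Matrix (Fin n) (Fin t) ℝ) :
    ∃ π : Equiv.Perm (Fin n), ∀ i,
      singvals X i ^ 2 = (isHermitian_mul_conjTranspose_self X).eigenvalues (π i) :=
  ⟨_, fun _ => Real.sq_sqrt (eigenvalues_self_mul_conjTranspose_nonneg X _)⟩

theorem norm_singvals (X : Matrix (Fin n) (Fin t) ℝ) : ‖singvals X‖ = ‖toEuc X‖ := by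
  obtain ⟨π, hπ⟩ := exists_perm_sq_singvals X
  rw [← sq_eq_sq₀ (norm_nonneg _) (norm_nonneg _), EuclideanSpace.norm_sq_eq,
    ← real_inner_self_eq_norm_sq, inner_toEuc, ← conjTranspose_eq_transpose_of_trivial,
    (isHermitian_mul_conjTranspose_self X).trace_eq_sum_eigenvalues]
  simp [hπ, Equiv.sum_comp]

theorem singvals_conj_diagRect (hnt : n ≤ t) {U : Matrix (Fin n) (Fin n) ℝ}
    {V : Matrix (Fin t) (Fin t) ℝ} (hU : Uᵀ * U = 1) (hV : Vᵀ * V = 1)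
    {x : EuclideanSpace ℝ (Fin n)} (hx : Antitone x) (hx₀ : ∀ i, 0 ≤ x i) :
    singvals (U * diagRect (t := t) x * Vᵀ) = x := by
  set M := U * diagRect (t := t) x * Vᵀ
  have hMM : M * Mᴴ = U * diagonal (fun i => x i * x i) * Uᵀ := by
    rw [conjTranspose_eq_transpose_of_trivial, transpose_mul, transpose_mul, transpose_transpose,
      ← diagRect_mul_transpose_diagRect hnt]
    simp only [M, Matrix.mul_assoc]
    rw [← Matrix.mul_assoc Vᵀ V, hV, Matrix.one_mul]
  obtain ⟨π, hπ⟩ := exists_perm_sq_singvals M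
  have hsq : univ.val.map (fun i => singvals M i ^ 2) = univ.val.map (fun i => x i * x i) := by
    rw [← (isHermitian_mul_conjTranspose_self M).map_eigenvalues_eq hU hMM, funext hπ]
    conv_rhs => rw [← Multiset.map_univ_val_equiv π, Multiset.map_map]
    rfl
  have hsq_anti {y : Fin n → ℝ} (hy : Antitone y) (hy₀ : ∀ i, 0 ≤ y i) :
      Antitone fun i => y i * y i := fun i j hij => mul_self_le_mul_self (hy₀ j) (hy hij)
  have := eq_of_antitone_of_map_univ_val_eq (hsq_anti (singvals_antitone M) (singvals_nonneg M))
    (hsq_anti hx hx₀) (by simpa [sq] using hsq)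
  ext i
  exact (mul_self_inj (singvals_nonneg M i) (hx₀ i)).1 (congrFun this i)

theorem exists_svd (hnt : n ≤ t) (Y : Matrix (Fin n) (Fin t) ℝ) :
    ∃ (U : Matrix (Fin n) (Fin n) ℝ) (V : Matrix (Fin t) (Fin t) ℝ),
      Uᵀ * U = 1 ∧ Vᵀ * V = 1 ∧ Y = U * diagRect (t := t) (singvals Y) * Vᵀ := by
  set hH := isHermitian_mul_conjTranspose_self Y
  obtain ⟨π, hπ⟩ := exists_perm_sq_singvals Y
  let u := hH.eigenvectorBasis.reindex π.symm
  let w i : EuclideanSpace ℝ (Fin t) := WithLp.toLp 2 (Yᵀ *ᵥ u i)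
  have hw i j : ⟪w i, w j⟫ = if i = j then singvals Y i ^ 2 else 0 := by
    have hYY : (Y * Yᵀ) *ᵥ u i = singvals Y i ^ 2 • u i := by
      simpa [u, hπ, conjTranspose_eq_transpose_of_trivial] using
        hH.mulVec_eigenvectorBasis (π i)
    have : ⟪w i, w j⟫ = ⟪WithLp.toLp 2 ((Y * Yᵀ) *ᵥ u i), u j⟫ := by
      simp only [w, EuclideanSpace.inner_eq_star_dotProduct, star_trivial]
      rw [dotProduct_mulVec, mulVec_transpose, vecMul_vecMul, ← dotProduct_mulVec]
    rw [this, hYY, WithLp.toLp_smul, WithLp.toLp_ofLp, real_inner_smul_left,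
      orthonormal_iff_ite.1 u.orthonormal]
    split_ifs <;> simp
  have hw_norm i : ‖w i‖ = singvals Y i := by
    rw [norm_eq_sqrt_real_inner, hw, if_pos rfl, Real.sqrt_sq (singvals_nonneg Y i)]
  obtain ⟨b, hb⟩ := exists_orthonormalBasis_smul_eq (w := w) (by simp) (Fin.castLEEmb hnt)
    fun i j hij => by simpa [hij] using hw i j
  let U := (EuclideanSpace.basisFun (Fin n) ℝ).toBasis.toMatrix u.toBasis
  let V := (EuclideanSpace.basisFun (Fin t) ℝ).toBasis.toMatrix b.toBasis
  have hU : Uᵀ * U = 1 := (mem_orthogonalGroup_iff' _ _).1 (by exact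
    (EuclideanSpace.basisFun (Fin n) ℝ).toMatrix_orthonormalBasis_mem_orthogonal u)
  have hV : Vᵀ * V = 1 := (mem_orthogonalGroup_iff' _ _).1 (by exact
    (EuclideanSpace.basisFun (Fin t) ℝ).toMatrix_orthonormalBasis_mem_orthogonal b)
  refine ⟨U, V, hU, hV, ?_⟩
  have hUY : Uᵀ * Y = diagRect (t := t) (singvals Y) * Vᵀ := by
    ext i k
    have := congrArg (· k) (hb i)
    simp only [w, hw_norm] at this
    rw [diagRect_mul_apply hnt]
    simpa [U, V, mul_apply, mulVec, dotProduct, mul_comm, Module.Basis.toMatrix_apply,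
      EuclideanSpace.basisFun_repr] using this
  rw [Matrix.mul_assoc, ← hUY, ← Matrix.mul_assoc, mul_eq_one_comm.1 hU, Matrix.one_mul]

end SingularValues

section VonNeumann

variable {n t : ℕ}

theorem trace_diagRect_mul_mul_le (hnt : n ≤ t) {a b : Fin n → ℝ} (ha : Antitone a)
    (hb : Antitone b) (ha₀ : ∀ i, 0 ≤ a i) (hb₀ : ∀ i, 0 ≤ b i)
    {Z : Matrix (Fin t) (Fin t) ℝ} {W : Matrix (Fin n) (Fin n) ℝ} (hZ : Zᵀ * Z = 1)
    (hW : Wᵀ * W = 1) :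
    trace (diagRect (t := t) a * Z * (diagRect (t := t) b)ᵀ * W) ≤ ∑ i, a i * b i := by
  set c := Fin.castLE hnt
  have hc : Function.Injective c := Fin.castLE_injective hnt
  have hZ' : Zᵀ * Zᵀᵀ = 1 := by rwa [transpose_transpose]
  have hW' : Wᵀ * Wᵀᵀ = 1 := by rwa [transpose_transpose]
  let D : Matrix (Fin n) (Fin n) ℝ := fun i j => (Z (c i) (c j) ^ 2 + W j i ^ 2) / 2
  have hrow i : ∑ j, D i j ≤ 1 := by
    have hZi := sum_sq_apply_comp_le_one (mul_eq_one_comm.1 hZ) hc (c i)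
    have hWi := sum_sq_apply_comp_le_one hW' Function.injective_id i
    simp only [transpose_apply, id] at hWi
    simp only [D, ← sum_div, sum_add_distrib]
    linarith
  have hcol j : ∑ i, D i j ≤ 1 := by
    have hZj := sum_sq_apply_comp_le_one hZ' hc (c j)
    have hWj := sum_sq_apply_comp_le_one (mul_eq_one_comm.1 hW) Function.injective_id j
    simp only [transpose_apply, id] at hZj hWj
    simp only [D, ← sum_div, sum_add_distrib]
    linarith
  calc trace (diagRect (t := t) a * Z * (diagRect (t := t) b)ᵀ * W)
      = ∑ i, ∑ j, a i * b j * (Z (c i) (c j) * W j i) := by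
        refine sum_congr rfl fun i _ => ?_
        rw [diag_apply, mul_apply]
        refine sum_congr rfl fun j _ => ?_
        rw [diagRect_mul_mul_transpose_diagRect_apply hnt, mul_assoc]
    _ ≤ ∑ i, ∑ j, a i * b j * D i j := by
        gcongr with i _ j _
        · exact mul_nonneg (ha₀ i) (hb₀ j)
        · have := two_mul_le_add_sq (Z (c i) (c j)) (W j i)
          show _ ≤ (_ + _) / 2
          linarith
    _ ≤ ∑ i, a i * b i := (ha.monovary hb).sum_mul_mul_le_sum_mul_of_substochastic ha₀ hb₀
        (fun _ _ => by positivity) hrow hcol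

theorem trace_mul_transpose_le_sum_singvals (hnt : n ≤ t) (Y X : Matrix (Fin n) (Fin t) ℝ) :
    trace (Y * Xᵀ) ≤ ∑ i, singvals Y i * singvals X i := by
  obtain ⟨U₁, V₁, hU₁, hV₁, hY⟩ := exists_svd hnt Y
  obtain ⟨U₂, V₂, hU₂, hV₂, hX⟩ := exists_svd hnt X
  have htrace : trace (Y * Xᵀ) = trace (diagRect (t := t) (singvals Y) * (V₁ᵀ * V₂) *
      (diagRect (t := t) (singvals X))ᵀ * (U₂ᵀ * U₁)) := by
    conv_lhs => rw [hY, hX, transpose_mul, transpose_mul, transpose_transpose, Matrix.mul_assoc,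
      Matrix.mul_assoc, trace_mul_comm]
    simp only [Matrix.mul_assoc]
  rw [htrace]
  refine trace_diagRect_mul_mul_le hnt (singvals_antitone Y) (singvals_antitone X)
    (singvals_nonneg Y) (singvals_nonneg X) ?_ ?_
  · rw [transpose_mul, transpose_transpose, Matrix.mul_assoc, ← Matrix.mul_assoc V₁,
      mul_eq_one_comm.1 hV₁, Matrix.one_mul, hV₂]
  · rw [transpose_mul, transpose_transpose, Matrix.mul_assoc, ← Matrix.mul_assoc U₂,
      mul_eq_one_comm.1 hU₂, Matrix.one_mul, hU₁]

theorem dist_singvals_le_dist_toEuc (hnt : n ≤ t) (Y X : Matrix (Fin n) (Fin t) ℝ) :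
    dist (singvals Y) (singvals X) ≤ dist (toEuc Y) (toEuc X) :=
  dist_le_dist_of_inner_le (norm_singvals Y) (norm_singvals X) <| by
    rw [inner_toEuc]
    simpa [PiLp.inner_apply, mul_comm] using
      trace_mul_transpose_le_sum_singvals hnt Y X

end VonNeumann

theorem AbsSymm.abs_comp_perm_mem {n : ℕ} {S : Set (EuclideanSpace ℝ (Fin n))} (hS : AbsSymm S)
    {x : EuclideanSpace ℝ (Fin n)} (hx : x ∈ S) (τ : Equiv.Perm (Fin n)) :
    (WithLp.toLp 2 fun i => |x (τ i)| : EuclideanSpace ℝ (Fin n)) ∈ S := by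
  have hε : IsSignFn fun i => if x (τ i) < 0 then -1 else 1 := fun i => by
    dsimp only
    split_ifs <;> simp
  convert (hS τ _ hε x).1 hx using 3 with i
  split_ifs with h
  · rw [abs_of_neg h, neg_one_mul]
  · rw [abs_of_nonneg (not_lt.1 h), one_mul]

theorem exists_singvals_mem_dist_le {n t : ℕ} (hnt : n ≤ t)
    {S : Set (EuclideanSpace ℝ (Fin n))} (hS : AbsSymm S) (Y : Matrix (Fin n) (Fin t) ℝ)
    {x : EuclideanSpace ℝ (Fin n)} (hx : x ∈ S) :
    ∃ X : Matrix (Fin n) (Fin t) ℝ, singvals X ∈ S ∧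
      dist (toEuc Y) (toEuc X) ≤ dist (singvals Y) x := by
  obtain ⟨τ, hτ⟩ := exists_perm_antitone_abs x
  set x' : EuclideanSpace ℝ (Fin n) := WithLp.toLp 2 fun i => |x (τ i)|
  obtain ⟨U, V, hU, hV, hY⟩ := exists_svd hnt Y
  have hX : singvals (U * diagRect (t := t) x' * Vᵀ) = x' :=
    singvals_conj_diagRect hnt hU hV hτ fun _ => abs_nonneg _
  refine ⟨U * diagRect (t := t) x' * Vᵀ, by rw [hX]; exact hS.abs_comp_perm_mem hx τ, ?_⟩
  have hinner : ⟪toEuc Y, toEuc (U * diagRect (t := t) x' * Vᵀ)⟫ = ⟪singvals Y, x'⟫ := by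
    conv_lhs => rw [hY]
    rw [inner_toEuc_conj hU hV, inner_toEuc_diagRect hnt]
  calc dist (toEuc Y) (toEuc (U * diagRect (t := t) x' * Vᵀ)) ≤ dist (singvals Y) x' :=
        dist_le_dist_of_inner_le (norm_singvals Y).symm (by rw [← norm_singvals, hX])
          hinner.ge
    _ ≤ dist (singvals Y) x := by
        refine dist_le_dist_of_inner_le rfl ?_ ?_
        · simp [x', EuclideanSpace.norm_eq, Equiv.sum_comp τ fun i => x i ^ 2]
        · simpa [x', PiLp.inner_apply, mul_comm] using sum_mul_le_sum_mul_abs_comp_perm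
            (singvals_nonneg Y) ((singvals_antitone Y).monovary hτ)

/-- transfer of distance: for absolutely symmetric `S`, the Frobenius
distance of `Y` to `σ⁻¹(S)` equals the Euclidean distance of `σ(Y)` to `S`. -/
theorem dist_transfer {n t : ℕ} (hnt : n ≤ t)
    (S : Set (EuclideanSpace ℝ (Fin n))) (hS : AbsSymm S)
    (Y : Matrix (Fin n) (Fin t) ℝ) :
    Metric.infDist (toEuc Y) (toEuc '' {X : Matrix (Fin n) (Fin t) ℝ | singvals X ∈ S})
      = Metric.infDist (singvals Y) S := by
  obtain rfl | ⟨x, hx⟩ := S.eq_empty_or_nonempty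
  · simp
  obtain ⟨X₀, hX₀, -⟩ := exists_singvals_mem_dist_le hnt hS Y hx
  apply le_antisymm
  · refine Metric.infDist_le_infDist_of_forall_exists ⟨x, hx⟩ fun x hx => ?_
    obtain ⟨X, hX, hdist⟩ := exists_singvals_mem_dist_le hnt hS Y hx
    exact ⟨toEuc X, Set.mem_image_of_mem _ hX, hdist⟩
  · refine Metric.infDist_le_infDist_of_forall_exists ⟨toEuc X₀, X₀, hX₀, rfl⟩ ?_
    rintro _ ⟨X, hX, rfl⟩
    exact ⟨singvals X, hX, dist_singvals_le_dist_toEuc hnt Y X⟩
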